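/- arXiv:2206.01454 — 3 statements merged into one kernel-verified Lean document; each statement's English description precedes it below -/
import Mathlib

section
/- (Convergence of k-NN distance; Lemma 4.) Let X be a random variable taking values in a metric space (𝒳, ρ), and let X_1, ..., X_n be i.i.d. observations of X. Suppose X has local dimension d around a point x ∈ 𝒳. Then there exist constants C, κ > 0 such that, whenever k/n ≤ κ, with probability at least 1 − e^{−k/4}, the distance from x to its k-th nearest neighbor among {X_1, ..., X_n} satisfies ρ(x, X_{π_k}) ≤ C (k/n)^{1/d}, where π orders the X_i by increasing distance to x. -/
open MeasureTheory Filter Metric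

noncomputable section

/-- The local Hölder ball `C^s(Z, z₀; X; L)`: functions `g` with
`dist (g z) (g z₀) ≤ L * (dist z z₀)^s` for all `z`. -/
def LocHolderBall {Z X : Type*} [PseudoMetricSpace Z] [PseudoMetricSpace X]
    (s L : ℝ) (z0 : Z) (g : Z → X) : Prop :=
  ∀ z, dist (g z) (g z0) ≤ L * dist z z0 ^ s

/-- The global Hölder ball `C^s(Z; X; L)`. -/
def GlobHolderBall {Z X : Type*} [PseudoMetricSpace Z] [PseudoMetricSpace X]
    (s L : ℝ) (g : Z → X) : Prop :=
  ∀ z z', dist (g z) (g z') ≤ L * dist z z' ^ s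

/-- A measure `P` on a metric space has local dimension `d` around `x`:
`liminf_{r↓0} P(closedBall x r)/r^d > 0`. -/
def HasLocalDim {X : Type*} [PseudoMetricSpace X] [MeasurableSpace X]
    (P : Measure X) (x : X) (d : ℝ) : Prop :=
  0 < liminf (fun r : ℝ => (P (closedBall x r)).toReal / r ^ d) (nhdsWithin 0 (Set.Ioi 0))

/-- A random variable `V` on `(Ω, μ)` has local dimension `d` around `x`. -/
def RVHasLocalDim {Ω X : Type*} [MeasurableSpace Ω] [PseudoMetricSpace X]
    (μ : Measure Ω) (V : Ω → X) (x : X) (d : ℝ) : Prop :=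
  0 < liminf (fun r : ℝ => (μ {ω | dist (V ω) x ≤ r}).toReal / r ^ d)
      (nhdsWithin 0 (Set.Ioi 0))

/-- A probability distribution on `ℝ^d` is sub-Gaussian:
`E[exp⟨x, t⟩] ≤ exp(‖t‖₂²/2)` for all `t`. -/
def SubGaussianVec {d : ℕ} (P : Measure (Fin d → ℝ)) : Prop :=
  ∀ t : Fin d → ℝ, ∫ x, Real.exp (∑ j, x j * t j) ∂P ≤ Real.exp ((∑ j, t j ^ 2) / 2)

/-- A probability distribution on `ℝ` is sub-Gaussian. -/
def SubGaussianReal (P : Measure ℝ) : Prop :=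
  ∀ t : ℝ, ∫ x, Real.exp (x * t) ∂P ≤ Real.exp (t ^ 2 / 2)

/-- `v` is a possible value of the `k`-nearest-neighbor regressor of the data
`(X i, Y i)` at the point `x0`: there is an enumeration of the data ordered by
increasing distance of `X i` to `x0` (ties broken arbitrarily), and `v` is the
average of the responses `Y i` over the first `k` data points. -/
def IsKNNValue {ι : Type*} [Fintype ι] {dX : ℕ} (k : ℕ) (x0 : Fin dX → ℝ)
    (X : ι → Fin dX → ℝ) (Y : ι → ℝ) (v : ℝ) : Prop :=
  ∃ e : ι ≃ Fin (Fintype.card ι),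
    (∀ i j : ι, e i ≤ e j → dist (X i) x0 ≤ dist (X j) x0) ∧
    v = (k : ℝ)⁻¹ * ∑ i : ι, if ((e i : ℕ) < k) then Y i else 0

/-- The cube `[0,1]^m` with the sup metric. -/
abbrev Cube (m : ℕ) := Fin m → Set.Icc (0:ℝ) 1

/-- The standard `d`-dimensional bump function
`K_d(x) = exp(1 - 1/(1 - ‖x‖₂²)) 1{‖x‖₂ < 1}`. -/
def bumpFn (d : ℕ) (x : Fin d → ℝ) : ℝ :=
  if (∑ j, x j ^ 2) < 1 then Real.exp (1 - 1 / (1 - ∑ j, x j ^ 2)) else 0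

/-- The Hölder seminorm `‖f‖_{C^s} = sup_{z ≠ z'} dist (f z) (f z') / dist z z' ^ s`. -/
def holderSeminorm {Z X : Type*} [PseudoMetricSpace Z] [PseudoMetricSpace X]
    (s : ℝ) (f : Z → X) : ℝ :=
  ⨆ p : Z × Z, if dist p.1 p.2 = 0 then 0 else dist (f p.1) (f p.2) / dist p.1 p.2 ^ s


/-!
From `HasLocalDim` we get `c, r₀ > 0` with `c r^d ≤ P (closedBall x r)` for `0 < r < r₀`; as `P`
is finite this forces `d ≥ 0`, and for `C = (2/c)^(1/d)` and `k/n` small the ball `S` of radius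
`C (k/n)^(1/d)` has mass `p ≥ 2k/n`. If the `k`-th nearest neighbour of `x` lies outside `S`, at
most `k - 1` sample points fall into `S`, and a Chernoff bound for this binomial lower tail gives
probability at most `2^(k-1) (1 - p/2)^n ≤ 2^(k-1) e^(-k) ≤ e^(-k/4)`, since `log 2 < 3/4`.
-/

open Finset Topology
open scoped ENNReal

section ProductMeasure

variable {𝒳 : Type*} [MeasurableSpace 𝒳]

theorem MeasurableEquiv.piFinSuccAbove_zero_symm_preimage {n : ℕ} (M : Set (Fin (n + 1) → 𝒳)) :
    (MeasurableEquiv.piFinSuccAbove (fun _ => 𝒳) 0).symm ⁻¹' M =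
      {p : 𝒳 × (Fin n → 𝒳) | Fin.cons p.1 p.2 ∈ M} := by
  simp only [piFinSuccAbove, Fin.zero_succAbove, Fin.insertNthEquiv_zero, symm_mk, Equiv.symm_symm,
    coe_mk]
  rfl

theorem measurableSet_setOf_fin_cons_mem {n : ℕ} {M : Set (Fin (n + 1) → 𝒳)}
    (hM : MeasurableSet M) : MeasurableSet {p : 𝒳 × (Fin n → 𝒳) | Fin.cons p.1 p.2 ∈ M} :=
  MeasurableEquiv.piFinSuccAbove_zero_symm_preimage M ▸
    (MeasurableEquiv.piFinSuccAbove _ 0).symm.measurable hM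

theorem measure_pi_fin_succ_eq_lintegral (P : Measure 𝒳) [SigmaFinite P] (n : ℕ)
    {M : Set (Fin (n + 1) → 𝒳)} (hM : MeasurableSet M) :
    Measure.pi (fun _ => P) M =
      ∫⁻ y, Measure.pi (fun _ : Fin n => P) {g | Fin.cons y g ∈ M} ∂P := by
  rw [← (measurePreserving_piFinSuccAbove (fun _ => P) 0).symm.measure_preimage
    hM.nullMeasurableSet, MeasurableEquiv.piFinSuccAbove_zero_symm_preimage,
    Measure.prod_apply (measurableSet_setOf_fin_cons_mem hM)]
  rfl

theorem lintegral_le_add_mul_one_sub_measure (P : Measure 𝒳) [IsProbabilityMeasure P]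
    (S : Set 𝒳) {f : 𝒳 → ℝ≥0∞} (hf : Measurable f) {a b : ℝ≥0∞}
    (hS : ∀ y ∈ S, f y ≤ a) (hle : ∀ y, f y ≤ a + b) :
    ∫⁻ y, f y ∂P ≤ a + b * (1 - P S) := by
  set U := {y | f y ≤ a}
  have hU : MeasurableSet U := measurableSet_le hf measurable_const
  have hfU : ∀ y, f y ≤ a + Uᶜ.indicator (fun _ => b) y := by
    intro y
    by_cases hy : y ∈ U
    · rw [Set.indicator_of_notMem (Set.notMem_compl_iff.2 hy), add_zero]; exact hy
    · rw [Set.indicator_of_mem hy]; exact hle y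
  calc ∫⁻ y, f y ∂P ≤ ∫⁻ y, a + Uᶜ.indicator (fun _ => b) y ∂P := lintegral_mono hfU
    _ = a + b * P Uᶜ := by
      rw [lintegral_add_left measurable_const, lintegral_const, measure_univ, mul_one,
        lintegral_indicator_const hU.compl, mul_comm]
    _ ≤ a + b * (1 - P S) := by
      rw [prob_compl_eq_one_sub hU]
      gcongr
      exact hS

theorem ENNReal.one_add_one_sub_eq_two_mul {p : ℝ≥0∞} (hp : p ≤ 1) :
    1 + (1 - p) = 2 * (1 - p / 2) := by
  rw [ENNReal.mul_sub fun _ _ => ENNReal.ofNat_ne_top,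
    ENNReal.mul_div_cancel two_ne_zero ENNReal.ofNat_ne_top, mul_one, add_comm,
    ENNReal.sub_add_eq_add_sub hp (ne_top_of_le_ne_top ENNReal.one_ne_top hp), one_add_one_eq_two]

/- Induction on the first coordinate rather than Markov's inequality for `∏ i, 2 ^ (-1[xs i ∈ S])`:
`S` need not be measurable, and `P S` is then its outer measure. -/
open scoped Classical in
theorem measure_pi_le_of_card_mem_le (P : Measure 𝒳) [IsProbabilityMeasure P] (S : Set 𝒳)
    (n m : ℕ) {M : Set (Fin n → 𝒳)} (hM : MeasurableSet M)
    (hcard : ∀ xs ∈ M, #{i | xs i ∈ S} ≤ m) :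
    Measure.pi (fun _ => P) M ≤ 2 ^ m * (1 - P S / 2) ^ n := by
  induction n generalizing m with
  | zero => calc
      Measure.pi (fun _ => P) M ≤ 1 := prob_le_one
      _ ≤ 2 ^ m * (1 - P S / 2) ^ 0 := by simpa using one_le_pow₀ one_le_two
  | succ n ih =>
    set slice := fun y => {g : Fin n → 𝒳 | Fin.cons y g ∈ M}
    have hslice : ∀ y, MeasurableSet (slice y) := fun y =>
      measurable_prodMk_left (measurableSet_setOf_fin_cons_mem hM)
    have hcard_cons : ∀ y, ∀ g ∈ slice y, (if y ∈ S then 1 else 0) + #{i | g i ∈ S} ≤ m :=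
      fun y g hg => by simpa [Fin.card_filter_univ_succ'] using hcard _ hg
    -- a slice over a point of `S` has one point of `S` fewer, which halves the bound
    set a := 2 ^ m * (1 - P S / 2) ^ n / 2
    have h2a : 2 ^ m * (1 - P S / 2) ^ n = a + a := by
      rw [← two_mul, ENNReal.mul_div_cancel two_ne_zero ENNReal.ofNat_ne_top]
    have hS : ∀ y ∈ S, Measure.pi (fun _ => P) (slice y) ≤ a := by
      intro y hy
      rcases m with _ | m
      · have : slice y = ∅ := Set.eq_empty_of_forall_notMem fun g hg => by
          simpa [hy] using hcard_cons y g hg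
        simp [this]
      · refine (ih m (hslice y) fun g hg => ?_).trans_eq ?_
        · have := hcard_cons y g hg
          simp only [hy, if_true] at this
          omega
        · rw [ENNReal.eq_div_iff two_ne_zero ENNReal.ofNat_ne_top, pow_succ]; ring
    have hle : ∀ y, Measure.pi (fun _ => P) (slice y) ≤ a + a := fun y =>
      h2a ▸ ih m (hslice y) fun g hg => (Nat.le_add_left _ _).trans (hcard_cons y g hg)
    calc Measure.pi (fun _ => P) M = ∫⁻ y, Measure.pi (fun _ => P) (slice y) ∂P :=
          measure_pi_fin_succ_eq_lintegral P n hM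
      _ ≤ a + a * (1 - P S) := lintegral_le_add_mul_one_sub_measure P S
          (measurable_measure_prodMk_left (measurableSet_setOf_fin_cons_mem hM)) hS hle
      _ = 2 ^ m * (1 - P S / 2) ^ (n + 1) := by
        rw [← mul_one_add, ENNReal.one_add_one_sub_eq_two_mul prob_le_one, pow_succ,
          ← mul_assoc, ← mul_assoc, mul_comm a 2, h2a, two_mul]

open scoped Classical in
theorem one_sub_le_toReal_measure_pi_of_card_mem_le (P : Measure 𝒳) [IsProbabilityMeasure P]
    (S : Set 𝒳) {n m : ℕ} {E : Set (Fin n → 𝒳)}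
    (hE : ∀ xs ∉ E, #{i | xs i ∈ S} ≤ m) :
    1 - 2 ^ m * (1 - (P S).toReal / 2) ^ n ≤ (Measure.pi (fun _ => P) E).toReal := by
  set μ := Measure.pi fun _ : Fin n => P
  -- `E` need not be measurable: pass to a measurable hull, whose complement lies in `Eᶜ`
  set V := toMeasurable μ E
  have hV : MeasurableSet V := measurableSet_toMeasurable μ E
  have hVc : μ Vᶜ ≤ 2 ^ m * (1 - P S / 2) ^ n := measure_pi_le_of_card_mem_le P S n m hV.compl
    fun xs hxs => hE xs fun hxE => hxs (subset_toMeasurable μ E hxE)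
  have hVc' : (μ Vᶜ).toReal ≤ 2 ^ m * (1 - (P S).toReal / 2) ^ n := by
    refine (ENNReal.toReal_mono (by finiteness) hVc).trans_eq ?_
    rw [ENNReal.toReal_mul, ENNReal.toReal_pow, ENNReal.toReal_pow,
      ENNReal.toReal_sub_of_le (ENNReal.half_le_self.trans prob_le_one) ENNReal.one_ne_top,
      ENNReal.toReal_div]
    norm_num
  have hcompl := probReal_compl_eq_one_sub (μ := μ) hV
  rw [measureReal_def, measureReal_def] at hcompl
  rw [← measure_toMeasurable E]
  linarith

end ProductMeasure

open scoped Classical in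
theorem card_mem_closedBall_le_of_lt_dist {𝒳 : Type*} [PseudoMetricSpace 𝒳] (x : 𝒳) {n : ℕ}
    (xs : Fin n → 𝒳) (π : Equiv.Perm (Fin n))
    (hsort : ∀ i j, i ≤ j → dist x (xs (π i)) ≤ dist x (xs (π j))) {t : ℝ} {j : Fin n}
    (ht : t < dist x (xs (π j))) :
    #{i | xs i ∈ closedBall x t} ≤ j := by
  calc #{i | xs i ∈ closedBall x t} ≤ #(Iio j) := by
        refine card_le_card_of_injOn π.symm (fun i hi => ?_) π.symm.injective.injOn
        simp only [mem_coe, mem_filter, mem_univ, true_and, mem_closedBall, dist_comm] at hi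
        simp only [coe_Iio, Set.mem_Iio]
        by_contra! hji
        exact (ht.trans_le (by simpa using hsort j _ hji)).not_ge hi
    _ = j := Fin.card_Iio j

theorem two_pow_mul_one_sub_half_pow_le_exp {k n : ℕ} (hkn : k ≤ n) {p : ℝ}
    (hp : 2 * k / n ≤ p) (hp1 : p ≤ 1) :
    2 ^ (k - 1) * (1 - p / 2) ^ n ≤ Real.exp (-k / 4) := by
  rcases n.eq_zero_or_pos with rfl | hn
  · simp [Nat.le_zero.1 hkn]
  have hkp : (k : ℝ) / n ≤ p / 2 := by
    rw [mul_div_assoc] at hp; linarith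
  have hhalf : (1 - p / 2) ^ n ≤ Real.exp (-k) :=
    (pow_le_pow_left₀ (by linarith) (by linarith) n).trans
      (Real.one_sub_div_pow_le_exp_neg (by exact_mod_cast hkn))
  calc 2 ^ (k - 1) * (1 - p / 2) ^ n ≤ 2 ^ k * Real.exp (-k) :=
        mul_le_mul (pow_le_pow_right₀ one_le_two (k.sub_le 1)) hhalf (pow_nonneg (by linarith) n)
          (by positivity)
    _ = Real.exp (k * (Real.log 2 - 1)) := by
        rw [← Real.rpow_natCast, Real.rpow_def_of_pos two_pos, ← Real.exp_add]; ring_nf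
    _ ≤ Real.exp (-k / 4) := by
        gcongr
        nlinarith [Real.log_two_lt_d9, (Nat.cast_nonneg k : (0 : ℝ) ≤ k)]

namespace HasLocalDim

variable {𝒳 : Type*} [PseudoMetricSpace 𝒳] [MeasurableSpace 𝒳] {P : Measure 𝒳} {x : 𝒳} {d : ℝ}

theorem exists_mul_rpow_le (hdim : HasLocalDim P x d) :
    ∃ c > 0, ∃ r₀ > 0, ∀ r, 0 < r → r < r₀ → c * r ^ d ≤ (P (closedBall x r)).toReal := by
  have hbdd : IsBoundedUnder (· ≥ ·) (𝓝[>] (0 : ℝ))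
      fun r => (P (closedBall x r)).toReal / r ^ d :=
    isBoundedUnder_of_eventually_ge (a := 0) <| eventually_nhdsWithin_of_forall fun r hr =>
      div_nonneg ENNReal.toReal_nonneg (Real.rpow_nonneg (le_of_lt hr) d)
  obtain ⟨r₀, hr₀, hball⟩ := Metric.eventually_nhds_iff.1 <| eventually_nhdsWithin_iff.1 <|
    eventually_lt_of_lt_liminf (half_lt_self hdim) hbdd
  refine ⟨_, half_pos hdim, r₀, hr₀, fun r hr hrr₀ => ?_⟩
  have := hball (by rwa [Real.dist_0_eq_abs, abs_of_pos hr]) hr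
  exact ((lt_div_iff₀ (Real.rpow_pos_of_pos hr d)).1 this).le

theorem nonneg [IsFiniteMeasure P] (hdim : HasLocalDim P x d) : 0 ≤ d := by
  obtain ⟨c, hc, r₀, hr₀, hlow⟩ := hdim.exists_mul_rpow_le
  by_contra! hd
  have hsmall : ∀ᶠ r in 𝓝[>] (0 : ℝ), r ∈ Set.Ioo 0 r₀ := Ioo_mem_nhdsGT hr₀
  obtain ⟨r, ⟨hr, hrr₀⟩, hbig⟩ := (hsmall.and <|
    (tendsto_rpow_neg_nhdsGT_zero hd).eventually_gt_atTop ((P Set.univ).toReal / c)).exists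
  rw [div_lt_iff₀' hc] at hbig
  exact (hbig.trans_le (hlow r hr hrr₀)).not_ge
    (ENNReal.toReal_mono (measure_ne_top P _) (measure_mono (Set.subset_univ _)))

theorem exists_two_mul_le_measure_closedBall [IsFiniteMeasure P] (hdim : HasLocalDim P x d) :
    ∃ C > 0, ∃ κ > 0, ∀ q : ℝ, 0 < q → q ≤ κ →
      2 * q ≤ (P (closedBall x (C * q ^ (1 / d)))).toReal := by
  obtain ⟨c, hc, r₀, hr₀, hlow⟩ := hdim.exists_mul_rpow_le
  rcases hdim.nonneg.eq_or_lt with rfl | hd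
  · -- `1 / 0 = 0` in Lean, so the radius is the constant `C`
    refine ⟨r₀ / 2, half_pos hr₀, c / 2, half_pos hc, fun q _ hqκ => ?_⟩
    have := hlow (r₀ / 2) (half_pos hr₀) (half_lt_self hr₀)
    simp only [div_zero, Real.rpow_zero, mul_one] at this ⊢
    linarith
  set C := (2 / c) ^ (1 / d) with hC_def
  have hC : 0 < C := by positivity
  refine ⟨C, hC, (r₀ / (2 * C)) ^ d, by positivity, fun q hq hqκ => ?_⟩
  have hr : 0 < C * q ^ (1 / d) := by positivity
  have hrr₀ : C * q ^ (1 / d) < r₀ := calc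
    C * q ^ (1 / d) ≤ C * ((r₀ / (2 * C)) ^ d) ^ (1 / d) := by gcongr
    _ = r₀ / 2 := by
      rw [one_div, Real.rpow_rpow_inv (by positivity) hd.ne']; field_simp
    _ < r₀ := half_lt_self hr₀
  calc 2 * q = c * (C * q ^ (1 / d)) ^ d := by
        have hCd : C ^ d = 2 / c := by
          rw [hC_def, one_div, Real.rpow_inv_rpow (by positivity) hd.ne']
        rw [Real.mul_rpow hC.le (by positivity), one_div, Real.rpow_inv_rpow hq.le hd.ne', hCd]
        field_simp
    _ ≤ _ := hlow _ hr hrr₀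

end HasLocalDim

/-- **Lemma 4 (Convergence of k-NN distance).**
If `X₁, ..., Xₙ` are i.i.d. with law `P` having local dimension `d` around `x`, then there
are constants `C, κ > 0` such that whenever `k/n ≤ κ`, with probability at least
`1 - exp(-k/4)`, the distance from `x` to its `k`-th nearest neighbor among the sample
is at most `C (k/n)^{1/d}`. -/
theorem knn_distance_convergence
    {𝒳 : Type*} [MetricSpace 𝒳] [MeasurableSpace 𝒳]
    (P : Measure 𝒳) [IsProbabilityMeasure P] (x : 𝒳) (d : ℝ)
    (hdim : HasLocalDim P x d) :
    ∃ C κ : ℝ, 0 < C ∧ 0 < κ ∧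
      ∀ (n k : ℕ) (hk : 0 < k) (hkn : k ≤ n), (k : ℝ) / n ≤ κ →
        1 - Real.exp (-(k : ℝ) / 4) ≤
          ((Measure.pi fun _ : Fin n => P)
            {xs | ∀ π : Equiv.Perm (Fin n),
              (∀ i j : Fin n, i ≤ j → dist x (xs (π i)) ≤ dist x (xs (π j))) →
              dist x (xs (π ⟨k - 1, by omega⟩)) ≤ C * ((k : ℝ) / n) ^ (1 / d)}).toReal := by
  obtain ⟨C, hC, κ, hκ, hmass⟩ := hdim.exists_two_mul_le_measure_closedBall
  refine ⟨C, κ, hC, hκ, fun n k hk hkn hkκ => ?_⟩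
  set S := closedBall x (C * ((k : ℝ) / n) ^ (1 / d))
  have hq : (0 : ℝ) < k / n := div_pos (by exact_mod_cast hk) (by exact_mod_cast hk.trans_le hkn)
  have hp : 2 * (k : ℝ) / n ≤ (P S).toReal := by rw [mul_div_assoc]; exact hmass _ hq hkκ
  refine le_trans ?_ (one_sub_le_toReal_measure_pi_of_card_mem_le P S (m := k - 1) ?_)
  · gcongr
    exact two_pow_mul_one_sub_half_pow_le_exp hkn hp measureReal_le_one
  · intro xs hxs
    simp only [Set.mem_ofPred_eq, not_forall, not_le] at hxs
    obtain ⟨π, hsort, hfar⟩ := hxs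
    exact card_mem_closedBall_le_of_lt_dist x xs π hsort hfar
end
end

section
/- (Packing family of Hölder functions; Lemma 7.) Fix x_0 ∈ ℝ^{d_X}, s_g ∈ (0,1], L_g > 0. For any M ∈ ℕ there exists a family Θ_{g,M} of M^{d_Z} functions from 𝒵 = [0,1]^{d_Z} to ℝ^{d_X}, each belonging to the global Hölder ball C^{s_g}(𝒵; ℝ^{d_X}; L_g) (with the sup-norm on ℝ^{d_X}), such that: (1) |Θ_{g,M}| = M^{d_Z}; (2) for each g ∈ Θ_{g,M} there exists z_g ∈ 𝒵 with g(z_g) = x_0; (3) there exist g_0 ∈ ℝ^{d_X} and a constant C_{d_Z,s_g} > 0 depending only on d_Z and s_g with (a) ‖g_0 − x_0‖_∞ = C_{d_Z,s_g} L_g M^{−s_g}, and (b) for any two distinct g, g' ∈ Θ_{g,M}, the functions z ↦ 1{g(z) ≠ g_0} and z ↦ 1{g'(z) ≠ g_0} have disjoint supports in 𝒵. -/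
open MeasureTheory Filter Metric

noncomputable section

lemma pf_rpow_add_le' {s : ℝ} (hs0 : 0 ≤ s) (hs1 : s ≤ 1) {u v : ℝ}
    (hu : 0 ≤ u) (hv : 0 ≤ v) : (u + v) ^ s ≤ u ^ s + v ^ s := by
  have h := NNReal.rpow_add_le_add_rpow (⟨u, hu⟩ : NNReal) ⟨v, hv⟩ hs0 hs1
  exact_mod_cast h

lemma pf_abs_rpow_sub_rpow_le {s : ℝ} (hs0 : 0 < s) (hs1 : s ≤ 1) {u v : ℝ}
    (hu : 0 ≤ u) (hv : 0 ≤ v) : |u ^ s - v ^ s| ≤ |u - v| ^ s := by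
  wlog h : v ≤ u generalizing u v
  · rw [abs_sub_comm, abs_sub_comm u v]; exact this hv hu (le_of_not_ge h)
  have h1 : v ^ s ≤ u ^ s := Real.rpow_le_rpow hv h hs0.le
  have h2 : u ^ s ≤ v ^ s + (u - v) ^ s := by
    calc u ^ s = (v + (u - v)) ^ s := by ring_nf
    _ ≤ v ^ s + (u - v) ^ s := pf_rpow_add_le' hs0.le hs1 hv (by linarith)
  rw [abs_of_nonneg (by linarith), abs_of_nonneg (by linarith)]
  linarith

/-- **Lemma 7 (Packing family of Hölder functions).**
There is a constant `Cc > 0` depending only on `d_Z` and `s_g` such that for every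
`L_g > 0`, `x₀ ∈ ℝ^{d_X}` and `M ∈ ℕ`, there is a family `Θ` of `M^{d_Z}` functions
from `[0,1]^{d_Z}` to `ℝ^{d_X}`, each in the global Hölder ball, each attaining the
value `x₀`, and a point `g₀` with `‖g₀ - x₀‖_∞ = Cc L_g M^{-s_g}` such that the
indicator functions `z ↦ 1{g z ≠ g₀}` of distinct members have disjoint supports. -/
theorem packing_family
    (dZ dX : ℕ) (hdX : 0 < dX) (sg : ℝ) (hsg : sg ∈ Set.Ioc (0:ℝ) 1) :
    ∃ Cc : ℝ, 0 < Cc ∧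
      ∀ (Lg : ℝ), 0 < Lg → ∀ (x0 : Fin dX → ℝ) (M : ℕ), 0 < M →
        ∃ Θ : Finset (Cube dZ → (Fin dX → ℝ)),
          Θ.card = M ^ dZ ∧
          (∀ g ∈ Θ, GlobHolderBall sg Lg g) ∧
          (∀ g ∈ Θ, ∃ z, g z = x0) ∧
          ∃ g0 : Fin dX → ℝ,
            ‖g0 - x0‖ = Cc * Lg * (M : ℝ) ^ (-sg) ∧
            ∀ g ∈ Θ, ∀ g' ∈ Θ, g ≠ g' → ∀ z, g z = g0 ∨ g' z = g0 := by
  classical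
  obtain ⟨hsg0, hsg1⟩ := hsg
  refine ⟨(2:ℝ) ^ (-sg), Real.rpow_pos_of_pos two_pos _, ?_⟩
  intro Lg hLg x0 M hM
  haveI : Nonempty (Fin dX) := ⟨⟨0, hdX⟩⟩
  have hM0 : (0:ℝ) < (M:ℝ) := by exact_mod_cast hM
  set ε : ℝ := (2 * M)⁻¹ with hεdef
  have hε : 0 < ε := by positivity
  have hεs : 0 < ε ^ sg := Real.rpow_pos_of_pos hε _
  have h2ε : ε + ε = (M:ℝ)⁻¹ := by
    rw [hεdef, mul_inv]; ring
  -- centers of the subcubes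
  have hcmem : ∀ (a : Fin dZ → Fin M) (i : Fin dZ),
      ((a i : ℝ) + 2⁻¹) / M ∈ Set.Icc (0:ℝ) 1 := by
    intro a i
    constructor
    · positivity
    · rw [div_le_one hM0]
      have : (a i : ℝ) + 1 ≤ M := by exact_mod_cast (a i).2
      linarith
  set c : (Fin dZ → Fin M) → Cube dZ :=
    fun a i => ⟨((a i : ℝ) + 2⁻¹) / M, hcmem a i⟩ with hc
  set ψ : (Fin dZ → Fin M) → Cube dZ → ℝ :=
    fun a z => max 0 (ε - dist z (c a)) ^ sg with hψ
  set g0 : Fin dX → ℝ := fun j => x0 j - Lg * ε ^ sg with hg0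
  set G : (Fin dZ → Fin M) → Cube dZ → (Fin dX → ℝ) :=
    fun a z j => g0 j + Lg * ψ a z with hG
  have hψ_self : ∀ a, ψ a (c a) = ε ^ sg := by
    intro a; simp [hψ, max_eq_right hε.le]
  have hψ_nonneg : ∀ a z, 0 ≤ ψ a z := fun a z =>
    Real.rpow_nonneg (le_max_left _ _) _
  -- centers are 1/M-separated
  have hsep : ∀ a b : Fin dZ → Fin M, a ≠ b → (M:ℝ)⁻¹ ≤ dist (c a) (c b) := by
    intro a b hab
    obtain ⟨i, hi⟩ := Function.ne_iff.1 hab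
    refine le_trans ?_ (dist_le_pi_dist (c a) (c b) i)
    rw [Subtype.dist_eq, Real.dist_eq]
    show (M:ℝ)⁻¹ ≤ |((a i : ℝ) + 2⁻¹) / M - ((b i : ℝ) + 2⁻¹) / M|
    have h1 : (1:ℝ) ≤ |(a i : ℝ) - (b i : ℝ)| := by
      rcases Nat.lt_or_ge (a i : ℕ) (b i : ℕ) with h | h
      · have : (a i : ℝ) + 1 ≤ (b i : ℝ) := by exact_mod_cast h
        rw [abs_sub_comm, abs_of_nonneg (by linarith)]; linarith
      · rcases Nat.lt_or_ge (b i : ℕ) (a i : ℕ) with h' | h'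
        · have : (b i : ℝ) + 1 ≤ (a i : ℝ) := by exact_mod_cast h'
          rw [abs_of_nonneg (by linarith)]; linarith
        · exact absurd (Fin.ext (le_antisymm h' h)) hi
    have heq : ((a i : ℝ) + 2⁻¹) / M - ((b i : ℝ) + 2⁻¹) / M
        = ((a i : ℝ) - (b i : ℝ)) / M := by ring
    rw [heq, abs_div, abs_of_pos hM0, inv_eq_one_div]
    gcongr
  -- away from its own cube, ψ vanishes
  have hψ_far : ∀ a b : Fin dZ → Fin M, a ≠ b → ψ a (c b) = 0 := by
    intro a b hab
    have h1 : (M:ℝ)⁻¹ ≤ dist (c b) (c a) := by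
      rw [dist_comm]; exact hsep a b hab
    have h2 : ε - dist (c b) (c a) ≤ 0 := by linarith
    simp only [hψ]
    rw [max_eq_left h2, Real.zero_rpow hsg0.ne']
  -- positivity of ψ forces closeness to the center
  have hψ_pos : ∀ (a : Fin dZ → Fin M) (z : Cube dZ), ψ a z ≠ 0 →
      dist z (c a) < ε := by
    intro a z hne
    by_contra h
    push_neg at h
    apply hne
    simp only [hψ]
    rw [max_eq_left (by linarith), Real.zero_rpow hsg0.ne']
  -- Hölder property of ψ
  have hψ_holder : ∀ (a : Fin dZ → Fin M) (z z' : Cube dZ),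
      |ψ a z - ψ a z'| ≤ dist z z' ^ sg := by
    intro a z z'
    set u := max 0 (ε - dist z (c a)) with hu
    set v := max 0 (ε - dist z' (c a)) with hv
    have huv : |u - v| ≤ dist z z' := by
      rw [hu, hv, max_comm 0 (ε - dist z (c a)), max_comm 0 (ε - dist z' (c a))]
      refine le_trans (abs_max_sub_max_le_abs _ _ _) ?_
      have : (ε - dist z (c a)) - (ε - dist z' (c a))
          = dist z' (c a) - dist z (c a) := by ring
      rw [this]
      exact le_trans (abs_dist_sub_le z' z (c a)) (by rw [dist_comm])
    calc |u ^ sg - v ^ sg| ≤ |u - v| ^ sg :=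
          pf_abs_rpow_sub_rpow_le hsg0 hsg1 (le_max_left _ _) (le_max_left _ _)
      _ ≤ dist z z' ^ sg := Real.rpow_le_rpow (abs_nonneg _) huv hsg0.le
  -- injectivity of the family
  have hGinj : Function.Injective G := by
    intro a b hab
    by_contra hne
    have h := congrFun (congrFun hab (c a)) ⟨0, hdX⟩
    simp only [hG] at h
    rw [hψ_self a, hψ_far b a (Ne.symm hne)] at h
    have : Lg * ε ^ sg = 0 := by linarith
    nlinarith
  refine ⟨Finset.image G Finset.univ, ?_, ?_, ?_, g0, ?_, ?_⟩
  · rw [Finset.card_image_of_injective _ hGinj, Finset.card_univ,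
      Fintype.card_fun, Fintype.card_fin, Fintype.card_fin]
  · intro g hg
    obtain ⟨a, -, rfl⟩ := Finset.mem_image.1 hg
    intro z z'
    have hr : (0:ℝ) ≤ Lg * dist z z' ^ sg := by positivity
    rw [dist_pi_le_iff hr]
    intro j
    show dist (g0 j + Lg * ψ a z) (g0 j + Lg * ψ a z') ≤ Lg * dist z z' ^ sg
    rw [Real.dist_eq]
    have : (g0 j + Lg * ψ a z) - (g0 j + Lg * ψ a z')
        = Lg * (ψ a z - ψ a z') := by ring
    rw [this, abs_mul, abs_of_pos hLg]
    exact mul_le_mul_of_nonneg_left (hψ_holder a z z') hLg.le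
  · intro g hg
    obtain ⟨a, -, rfl⟩ := Finset.mem_image.1 hg
    refine ⟨c a, funext fun j => ?_⟩
    show g0 j + Lg * ψ a (c a) = x0 j
    rw [hψ_self a, hg0]; ring
  · have h1 : g0 - x0 = fun _ : Fin dX => -(Lg * ε ^ sg) := by
      funext j
      show g0 j - x0 j = -(Lg * ε ^ sg)
      rw [hg0]; ring
    rw [h1, pi_norm_const, Real.norm_eq_abs, abs_neg, abs_of_pos (by positivity)]
    have h2 : ε ^ sg = (2:ℝ) ^ (-sg) * (M:ℝ) ^ (-sg) := by
      rw [hεdef, Real.inv_rpow (by positivity), ← Real.rpow_neg (by positivity),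
        Real.mul_rpow two_pos.le hM0.le]
    rw [h2]; ring
  · intro g hg g' hg' hne z
    obtain ⟨a, -, rfl⟩ := Finset.mem_image.1 hg
    obtain ⟨b, -, rfl⟩ := Finset.mem_image.1 hg'
    have hab : a ≠ b := fun h => hne (by rw [h])
    have key : ψ a z = 0 ∨ ψ b z = 0 := by
      by_contra h
      push_neg at h
      have h1 := hψ_pos a z h.1
      have h2 := hψ_pos b z h.2
      have h3 : dist (c a) (c b) ≤ dist z (c a) + dist z (c b) := by
        rw [dist_comm z (c a)]; exact dist_triangle _ _ _
      have := hsep a b hab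
      linarith
    rcases key with h | h
    · left; funext j; show g0 j + Lg * ψ a z = g0 j; rw [h]; ring
    · right; funext j; show g0 j + Lg * ψ b z = g0 j; rw [h]; ring


end
end

section
/- (Minimum distance under adaptive sampling with uniform noise; key step in the proof of Proposition 5.) Let d ≥ 1, a > 0, and let ε_1, ..., ε_n be i.i.d. random vectors, each uniformly distributed on the cube [−a, a]^d ⊆ ℝ^d. Suppose X_i = v_i + ε_i for i = 1, ..., n, where each v_i ∈ ℝ^d is a measurable function of (X_1, ..., X_{i−1}) (and possibly of auxiliary randomness independent of ε_i, ..., ε_n). Then for every r ∈ [0, a], P[ min_{1 ≤ i ≤ n} ‖X_i‖_∞ ≥ r ] ≥ (1 − (r/a)^d)^n. In particular, taking r = a n^{−1/d}, P[ min_{1 ≤ i ≤ n} ‖X_i‖_∞ ≥ a n^{−1/d} ] ≥ (1 − 1/n)^n ≥ 1/e. -/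
open MeasureTheory Filter Metric

noncomputable section

/-!
Given the past, `X i` is the noise `ε i`, which is independent of the past, shifted by a fixed
vector; so it lies in the sup-norm ball of radius `r` about `0` with probability at most
`(2r)^d / (2a)^d = (r/a)^d`, the normalized volume of that ball. Conditioning on the noise one
coordinate at a time multiplies these bounds, and `r = a n^{-1/d}` makes `(r/a)^d = 1/n`.
-/

open Function
open scoped ENNReal

lemma MeasurableEquiv.piFinSuccAbove_zero_symm_apply {E : Type*} [MeasurableSpace E] {n : ℕ}
    (p : E × (Fin n → E)) :
    (MeasurableEquiv.piFinSuccAbove (fun _ : Fin (n + 1) => E) 0).symm p = Fin.cons p.1 p.2 := by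
  simp [MeasurableEquiv.piFinSuccAbove_symm_apply, Fin.insertNthEquiv, Fin.insertNth_zero']

lemma Fin.dependsOn_cons_Iic_succ {E β : Type*} {n : ℕ} {f : (Fin (n + 1) → E) → β}
    {i : Fin n} (hf : DependsOn f (Set.Iic i.succ)) (c : E) :
    DependsOn (fun y : Fin n → E => f (Fin.cons c y)) (Set.Iic i) := by
  intro x y hxy
  refine hf fun j hj => ?_
  induction j using Fin.cases with
  | zero => rfl
  | succ k => exact hxy k (Fin.succ_le_succ_iff.1 hj)

/-- By Fubini in the first coordinate: once it is fixed to a value satisfying `A 0`, the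
remaining events satisfy the same hypotheses in the other `n - 1` coordinates. -/
theorem pow_le_measure_pi_setOf_forall_of_dependsOn_Iic {E : Type*} [MeasurableSpace E]
    [Nonempty E] (μ : Measure E) [SigmaFinite μ] {q : ℝ≥0∞} :
    ∀ {n : ℕ} {A : Fin n → (Fin n → E) → Prop}, (∀ i, MeasurableSet {x | A i x}) →
      (∀ i, DependsOn (A i) (Set.Iic i)) → (∀ i x, q ≤ μ {e | A i (update x i e)}) →
      q ^ n ≤ Measure.pi (fun _ => μ) {x | ∀ i, A i x}
  | 0, A, _, _, _ => by simp
  | n + 1, A, hA, hdep, hq => by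
    set cons := (MeasurableEquiv.piFinSuccAbove (fun _ : Fin (n + 1) => E) 0).symm
    have hcons : ∀ p, cons p = Fin.cons p.1 p.2 :=
      MeasurableEquiv.piFinSuccAbove_zero_symm_apply
    have hcons_meas : Measurable fun p : E × (Fin n → E) => (Fin.cons p.1 p.2 : Fin (n + 1) → E) :=
      funext hcons ▸ cons.measurable
    have hsplit : Measure.pi (fun _ => μ) {x | ∀ i, A i x} =
        ∫⁻ c, Measure.pi (fun _ => μ) {y | ∀ i, A i (Fin.cons c y)} ∂μ := by
      have hmeas : MeasurableSet {x | ∀ i, A i x} := by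
        simpa only [Set.ofPred_forall] using MeasurableSet.iInter hA
      rw [← (measurePreserving_piFinSuccAbove (fun _ => μ) 0).symm.measure_preimage_equiv,
        Measure.prod_apply (cons.measurable hmeas)]
      simp only [Set.preimage, Set.mem_ofPred_eq, hcons]
    obtain ⟨c₀⟩ := ‹Nonempty E›
    set y₀ : Fin n → E := fun _ => c₀
    set C := {c | A 0 (Fin.cons c y₀)}
    have hqC : q ≤ μ C := by
      simpa only [Fin.update_cons_zero] using hq 0 (Fin.cons c₀ y₀)
    have htail : ∀ c ∈ C, q ^ n ≤ Measure.pi (fun _ => μ) {y | ∀ i, A i (Fin.cons c y)} := by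
      intro c hc
      refine (pow_le_measure_pi_setOf_forall_of_dependsOn_Iic μ
        (A := fun i y => A i.succ (Fin.cons c y))
        (fun i => (hcons_meas.comp measurable_prodMk_left) (hA i.succ))
        (fun i => Fin.dependsOn_cons_Iic_succ (hdep i.succ) c)
        (fun i y => by simpa only [Fin.cons_update] using hq i.succ (Fin.cons c y))).trans
        (measure_mono fun y hy i => ?_)
      induction i using Fin.cases with
      | zero =>
        refine Eq.mp (hdep 0 fun j hj => ?_) hc
        rw [Fin.le_zero_iff.1 hj]
        rfl
      | succ k => exact hy k
    calc q ^ (n + 1) = q ^ n * q := pow_succ q n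
      _ ≤ q ^ n * μ C := by gcongr
      _ = ∫⁻ _ in C, q ^ n ∂μ := (setLIntegral_const C _).symm
      _ ≤ ∫⁻ c in C, Measure.pi (fun _ => μ) {y | ∀ i, A i (Fin.cons c y)} ∂μ :=
        setLIntegral_mono' ((hcons_meas.comp measurable_prodMk_right) (hA 0)) htail
      _ ≤ _ := setLIntegral_le_lintegral _ _
      _ = _ := hsplit.symm

/-- At `ω = (u, ε)`, `u` is the auxiliary randomness and `ε i` the noise of the `i`-th
observation. -/
def IsAdaptiveSampling {U E : Type*} [Add E] {n : ℕ} (V : (i : Fin n) → (Fin i → E) → U → E)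
    (X : Fin n → U × (Fin n → E) → E) : Prop :=
  ∀ i ω, X i ω = V i (fun j => X ⟨j, j.2.trans i.2⟩ ω) ω.1 + ω.2 i

namespace IsAdaptiveSampling

variable {U E : Type*} [Add E] {n : ℕ} {V : (i : Fin n) → (Fin i → E) → U → E}
  {X : Fin n → U × (Fin n → E) → E}

theorem dependsOn_Iic (hX : IsAdaptiveSampling V X) (i : Fin n) (u : U) :
    DependsOn (fun x => X i (u, x)) (Set.Iic i) := by
  induction i using WellFoundedLT.induction with
  | _ i ih =>
    intro x y hxy
    simp only [hX i]
    congr 1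
    · congr 1
      funext j
      exact ih _ j.2 fun k hk => hxy k (hk.trans (Fin.le_def.2 j.2.le))
    · exact hxy i Set.self_mem_Iic

theorem apply_update_self (hX : IsAdaptiveSampling V X) (i : Fin n) (u : U) (x : Fin n → E)
    (e : E) : X i (u, update x i e) = V i (fun j => X ⟨j, j.2.trans i.2⟩ (u, x)) u + e := by
  rw [hX i]
  congr 2
  · funext j
    refine hX.dependsOn_Iic _ u fun k hk => update_of_ne ?_ e x
    exact (Fin.lt_def.2 ((Fin.le_def.1 hk).trans_lt j.2)).ne
  · exact update_self i e x

variable [MeasurableSpace U] [MeasurableSpace E]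

theorem measurable [MeasurableAdd₂ E]
    (hV : ∀ i : Fin n, Measurable fun p : (Fin i → E) × U => V i p.1 p.2)
    (hX : IsAdaptiveSampling V X) (i : Fin n) : Measurable (X i) := by
  induction i using WellFoundedLT.induction with
  | _ i ih =>
    rw [funext (hX i)]
    exact ((hV i).comp ((measurable_pi_lambda _ fun j => ih _ j.2).prodMk measurable_fst)).add
      ((measurable_pi_apply i).comp measurable_snd)

theorem pow_le_measure_prod_setOf_forall_mem [MeasurableAdd₂ E] [Nonempty E]
    (PU : Measure U) [IsProbabilityMeasure PU] (μ : Measure E) [SigmaFinite μ]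
    (hV : ∀ i : Fin n, Measurable fun p : (Fin i → E) × U => V i p.1 p.2)
    (hX : IsAdaptiveSampling V X) {s : Set E} (hs : MeasurableSet s) {q : ℝ≥0∞}
    (hq : ∀ v, q ≤ μ {e | v + e ∈ s}) :
    q ^ n ≤ (PU.prod (Measure.pi fun _ => μ)) {ω | ∀ i, X i ω ∈ s} := by
  have hmeas : MeasurableSet {ω | ∀ i, X i ω ∈ s} := by
    rw [Set.ofPred_forall]
    exact MeasurableSet.iInter fun i => hX.measurable hV i hs
  rw [Measure.prod_apply hmeas]
  calc q ^ n = ∫⁻ _, q ^ n ∂PU := by simp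
    _ ≤ _ := lintegral_mono fun u =>
      pow_le_measure_pi_setOf_forall_of_dependsOn_Iic μ (A := fun i x => X i (u, x) ∈ s)
        (fun i => (hX.measurable hV i).comp measurable_prodMk_left hs)
        (fun i _ _ hxy => congrArg (· ∈ s) (hX.dependsOn_Iic i u hxy))
        (fun i x => by simpa only [hX.apply_update_self] using hq _)

end IsAdaptiveSampling

def IsUniformOnCube {d : ℕ} (P : Measure (Fin d → ℝ)) (a : ℝ) : Prop :=
  ∀ s : Set (Fin d → ℝ), MeasurableSet s →
    (P s).toReal = (volume (s ∩ Set.univ.pi fun _ : Fin d => Set.Icc (-a) a)).toReal / (2 * a) ^ d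

theorem IsUniformOnCube.measure_closedBall_le {d : ℕ} {a : ℝ} (ha : 0 < a)
    {P : Measure (Fin d → ℝ)} [IsFiniteMeasure P] (hP : IsUniformOnCube P a)
    (x : Fin d → ℝ) {r : ℝ} (hr : 0 ≤ r) : P (closedBall x r) ≤ ENNReal.ofReal ((r / a) ^ d) := by
  rw [← ENNReal.ofReal_toReal (measure_ne_top P _), hP _ measurableSet_closedBall]
  refine ENNReal.ofReal_le_ofReal ?_
  calc _ ≤ (volume (closedBall x r)).toReal / (2 * a) ^ d := by
        gcongr
        · exact measure_closedBall_lt_top.ne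
        · exact Set.inter_subset_left
    _ = (r / a) ^ d := by
        rw [Real.volume_pi_closedBall x hr, ENNReal.toReal_ofReal (by positivity), Fintype.card_fin, ← div_pow, mul_div_mul_left r a two_ne_zero]

theorem IsUniformOnCube.ofReal_one_sub_le_measure_le_norm_add {d : ℕ} {a : ℝ} (ha : 0 < a)
    {P : Measure (Fin d → ℝ)} [IsProbabilityMeasure P] (hP : IsUniformOnCube P a)
    (v : Fin d → ℝ) {r : ℝ} (hr : 0 ≤ r) :
    ENNReal.ofReal (1 - (r / a) ^ d) ≤ P {e | r ≤ ‖v + e‖} :=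
  calc ENNReal.ofReal (1 - (r / a) ^ d) = 1 - ENNReal.ofReal ((r / a) ^ d) := by
        rw [ENNReal.ofReal_sub _ (by positivity), ENNReal.ofReal_one]
    _ ≤ 1 - P (closedBall (-v) r) := tsub_le_tsub_left (hP.measure_closedBall_le ha _ hr) 1
    _ = P (closedBall (-v) r)ᶜ := (prob_compl_eq_one_sub measurableSet_closedBall).symm
    _ ≤ P {e | r ≤ ‖v + e‖} := measure_mono fun e he => by
        rw [Set.mem_compl_iff, mem_closedBall, dist_eq_norm, sub_neg_eq_add, add_comm, not_le] at he
        exact he.le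

theorem Real.rpow_neg_one_div_natCast_pow {x : ℝ} (hx : 0 ≤ x) {d : ℕ} (hd : d ≠ 0) :
    (x ^ (-(1 : ℝ) / d)) ^ d = 1 / x := by
  rw [neg_div, Real.rpow_neg hx, inv_pow, one_div, one_div, Real.rpow_inv_natCast_pow hx hd]

/-- **Key step in the proof of Proposition 5 (minimum distance under adaptive sampling
with uniform noise).**
If `ε₁, ..., εₙ` are i.i.d. uniform on the cube `[-a,a]^d` and `X i = v i + ε i`, where
each `v i` is a (measurable) function of the previous observations `X₁, ..., X_{i-1}` and
of auxiliary randomness `U` independent of the noise, then for every `r ∈ [0,a]`,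
`P[min_i ‖X i‖_∞ ≥ r] ≥ (1 - (r/a)^d)^n`; in particular, for `r = a n^{-1/d}`,
the probability is at least `(1 - 1/n)^n`. -/
theorem adaptive_uniform_min_distance
    (d : ℕ) (hd : 0 < d) (a : ℝ) (ha : 0 < a)
    (U : Type*) [MeasurableSpace U] (PU : Measure U) [IsProbabilityMeasure PU]
    (Pu : Measure (Fin d → ℝ)) [IsProbabilityMeasure Pu]
    (hPu : ∀ s : Set (Fin d → ℝ), MeasurableSet s →
      (Pu s).toReal =
        (volume (s ∩ Set.univ.pi fun _ : Fin d => Set.Icc (-a) a)).toReal / (2 * a) ^ d)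
    (n : ℕ)
    (V : (i : Fin n) → (Fin (i : ℕ) → (Fin d → ℝ)) → U → (Fin d → ℝ))
    (hV : ∀ i : Fin n, Measurable fun p : (Fin (i : ℕ) → (Fin d → ℝ)) × U => V i p.1 p.2)
    (X : Fin n → (U × (Fin n → Fin d → ℝ)) → (Fin d → ℝ))
    (hX : ∀ (i : Fin n) (ω : U × (Fin n → Fin d → ℝ)),
      X i ω = V i (fun j => X ⟨(j : ℕ), j.2.trans i.2⟩ ω) ω.1 + ω.2 i) :
    (∀ r : ℝ, r ∈ Set.Icc 0 a →
      (1 - (r / a) ^ d) ^ n ≤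
        ((PU.prod (Measure.pi fun _ : Fin n => Pu))
          {ω | ∀ i, r ≤ ‖X i ω‖}).toReal) ∧
    (0 < n →
      (1 - 1 / (n : ℝ)) ^ n ≤
        ((PU.prod (Measure.pi fun _ : Fin n => Pu))
          {ω | ∀ i, a * (n : ℝ) ^ (-(1 : ℝ) / d) ≤ ‖X i ω‖}).toReal) := by
  have hbound : ∀ r ∈ Set.Icc 0 a, (1 - (r / a) ^ d) ^ n ≤
      ((PU.prod (Measure.pi fun _ : Fin n => Pu)) {ω | ∀ i, r ≤ ‖X i ω‖}).toReal := by
    rintro r ⟨hr, hra⟩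
    have hp : (r / a) ^ d ≤ 1 := pow_le_one₀ (by positivity) ((div_le_one ha).2 hra)
    rw [← ENNReal.ofReal_le_iff_le_toReal (measure_ne_top _ _),
      ENNReal.ofReal_pow (sub_nonneg.2 hp)]
    exact IsAdaptiveSampling.pow_le_measure_prod_setOf_forall_mem PU Pu hV hX
      (measurableSet_le measurable_const measurable_norm)
      fun v => IsUniformOnCube.ofReal_one_sub_le_measure_le_norm_add ha hPu v hr
  refine ⟨hbound, fun hn => ?_⟩
  have hn1 : (1 : ℝ) ≤ n := Nat.one_le_cast.2 hn
  have hscale : (n : ℝ) ^ (-(1 : ℝ) / d) ≤ 1 :=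
    Real.rpow_le_one_of_one_le_of_nonpos hn1 (by rw [neg_div]; exact neg_nonpos.2 (by positivity))
  have h := hbound (a * (n : ℝ) ^ (-(1 : ℝ) / d))
    ⟨by positivity, mul_le_of_le_one_right ha.le hscale⟩
  rwa [mul_div_cancel_left₀ _ ha.ne', Real.rpow_neg_one_div_natCast_pow (by positivity) hd.ne']
    at h
end
end
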